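/- Subject reduction for the projection redexes: if (Γ; Δ) ⇒^+ π₁({s^+, r^−}^*)^+ : C is derivable in N2Int_λ then (Γ'; Δ') ⇒^+ s^+ : C is derivable for some Γ' ⊆ Γ, Δ' ⊆ Δ; and if (Γ; Δ) ⇒^− π₂({s^+, r^−}^*)^− : C then (Γ'; Δ') ⇒^− r^− : C for some Γ' ⊆ Γ, Δ' ⊆ Δ. -/

import Mathlib

namespace TwoInt

/-- Formulas of the bi-intuitionistic logic 2Int. -/
inductive Formula : Type
  | atom : ℕ → Formula
  | bot : Formula
  | top : Formula
  | conj : Formula → Formula → Formula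
  | disj : Formula → Formula → Formula
  | imp : Formula → Formula → Formula
  | coimp : Formula → Formula → Formula
deriving DecidableEq

/-- The duality function on formulas. -/
def dualF : Formula → Formula
  | .atom n => .atom n
  | .bot => .top
  | .top => .bot
  | .conj A B => .disj (dualF A) (dualF B)
  | .disj A B => .conj (dualF A) (dualF B)
  | .imp A B => .coimp (dualF B) (dualF A)
  | .coimp A B => .imp (dualF B) (dualF A)

/-- Complexity: number of connectives/constants in a formula. -/
def complexity : Formula → ℕ
  | .atom _ => 0
  | .bot => 1
  | .top => 1
  | .conj A B => complexity A + complexity B + 1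
  | .disj A B => complexity A + complexity B + 1
  | .imp A B => complexity A + complexity B + 1
  | .coimp A B => complexity A + complexity B + 1

/-- Polarities: + (proof) and − (dual proof / refutation). -/
inductive Pol | pos | neg
deriving DecidableEq

/-- The opposite polarity. -/
def Pol.dual : Pol → Pol
  | .pos => .neg
  | .neg => .pos

/-- Two-sorted λ-terms of λ^{2Int}.  Each constructor carries the polarity
annotation(s) appearing in the paper; `tcase q p r x s y t` is the case term
with scrutinee polarity `q`, conclusion polarity `p` and bound variables `x`
(in branch `s`) and `y` (in branch `t`); `mpair` is the mixed pair `{·⁺,·⁻}`. -/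
inductive Tm : Type
  | var : Pol → ℕ → Tm
  | top : Tm
  | bot : Tm
  | abort : Pol → Tm → Tm
  | pair : Pol → Tm → Tm → Tm
  | fst : Pol → Tm → Tm
  | snd : Pol → Tm → Tm
  | inl : Pol → Tm → Tm
  | inr : Pol → Tm → Tm
  | tcase : Pol → Pol → Tm → ℕ → Tm → ℕ → Tm → Tm
  | lam : Pol → ℕ → Tm → Tm
  | app : Pol → Tm → Tm → Tm
  | mpair : Pol → Tm → Tm → Tm
  | pi1 : Pol → Tm → Tm
  | pi2 : Pol → Tm → Tm
deriving DecidableEq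

/-- The duality function on terms: flips every polarity, swaps top/bot,
swaps the components of mixed pairs, swaps π₁/π₂, and commutes
homomorphically with all other constructors. -/
def dualT : Tm → Tm
  | .var p x => .var p.dual x
  | .top => .bot
  | .bot => .top
  | .abort p t => .abort p.dual (dualT t)
  | .pair p t s => .pair p.dual (dualT t) (dualT s)
  | .fst p t => .fst p.dual (dualT t)
  | .snd p t => .snd p.dual (dualT t)
  | .inl p t => .inl p.dual (dualT t)
  | .inr p t => .inr p.dual (dualT t)
  | .tcase q p r x s y t => .tcase q.dual p.dual (dualT r) x (dualT s) y (dualT t)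
  | .lam p x t => .lam p.dual x (dualT t)
  | .app p s t => .app p.dual (dualT s) (dualT t)
  | .mpair p s t => .mpair p.dual (dualT t) (dualT s)
  | .pi1 p t => .pi2 p.dual (dualT t)
  | .pi2 p t => .pi1 p.dual (dualT t)

/-- Substitution `t[s/x^p]`: replace the free occurrences of the variable `x`
of polarity `p` in `t` by `s` (stopping under binders of the same
polarity-annotated name). -/
def subst (t : Tm) (p : Pol) (x : ℕ) (s : Tm) : Tm :=
  match t with
  | .var q y => if q = p ∧ y = x then s else .var q y
  | .top => .top
  | .bot => .bot
  | .abort q u => .abort q (subst u p x s)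
  | .pair q u v => .pair q (subst u p x s) (subst v p x s)
  | .fst q u => .fst q (subst u p x s)
  | .snd q u => .snd q (subst u p x s)
  | .inl q u => .inl q (subst u p x s)
  | .inr q u => .inr q (subst u p x s)
  | .tcase q c r y u z v =>
      .tcase q c (subst r p x s)
        y (if q = p ∧ y = x then u else subst u p x s)
        z (if q = p ∧ z = x then v else subst v p x s)
  | .lam q y u => .lam q y (if q = p ∧ y = x then u else subst u p x s)
  | .app q u v => .app q (subst u p x s) (subst v p x s)
  | .mpair q u v => .mpair q (subst u p x s) (subst v p x s)
  | .pi1 q u => .pi1 q (subst u p x s)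
  | .pi2 q u => .pi2 q (subst u p x s)

/-- A context: a set of (variable, formula) type-assignment statements. -/
abbrev Ctx := Set (ℕ × Formula)

/-- The dual of a context: apply the duality to every typed term in it. -/
def dualCtx (Γ : Ctx) : Ctx := (fun q => (q.1, dualF q.2)) '' Γ

/-- Typing judgments of N2Int_λ with an explicit height bound:
`DerivH Γ Δ p t A n` means `(Γ; Δ) ⇒^p t : A` is derivable with a derivation
of height at most `n` (assumptions and constants have height 0, each rule
application adds one, and monotonicity/weakening is assumed). -/
inductive DerivH : Ctx → Ctx → Pol → Tm → Formula → ℕ → Prop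
  | axPos {Γ Δ : Ctx} {x A n} : (x, A) ∈ Γ → DerivH Γ Δ .pos (.var .pos x) A n
  | axNeg {Γ Δ : Ctx} {x A n} : (x, A) ∈ Δ → DerivH Γ Δ .neg (.var .neg x) A n
  | topI {Γ Δ n} : DerivH Γ Δ .pos .top .top n
  | botI {Γ Δ n} : DerivH Γ Δ .neg .bot .bot n
  | botE {Γ Δ t n p A} : DerivH Γ Δ .pos t .bot n →
      DerivH Γ Δ p (.abort p t) A (n + 1)
  | topE {Γ Δ t n p A} : DerivH Γ Δ .neg t .top n →
      DerivH Γ Δ p (.abort p t) A (n + 1)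
  | andI {Γ Δ s t A B n} : DerivH Γ Δ .pos s A n → DerivH Γ Δ .pos t B n →
      DerivH Γ Δ .pos (.pair .pos s t) (.conj A B) (n + 1)
  | andE1 {Γ Δ t A B n} : DerivH Γ Δ .pos t (.conj A B) n →
      DerivH Γ Δ .pos (.fst .pos t) A (n + 1)
  | andE2 {Γ Δ t A B n} : DerivH Γ Δ .pos t (.conj A B) n →
      DerivH Γ Δ .pos (.snd .pos t) B (n + 1)
  | andId1 {Γ Δ t A B n} : DerivH Γ Δ .neg t A n →
      DerivH Γ Δ .neg (.inl .neg t) (.conj A B) (n + 1)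
  | andId2 {Γ Δ t A B n} : DerivH Γ Δ .neg t B n →
      DerivH Γ Δ .neg (.inr .neg t) (.conj A B) (n + 1)
  | andEd {Γ Δ r s t x y A B C p n} :
      DerivH Γ Δ .neg r (.conj A B) n →
      DerivH Γ (insert (x, A) Δ) p s C n →
      DerivH Γ (insert (y, B) Δ) p t C n →
      DerivH Γ Δ p (.tcase .neg p r x s y t) C (n + 1)
  | orI1 {Γ Δ t A B n} : DerivH Γ Δ .pos t A n →
      DerivH Γ Δ .pos (.inl .pos t) (.disj A B) (n + 1)
  | orI2 {Γ Δ t A B n} : DerivH Γ Δ .pos t B n →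
      DerivH Γ Δ .pos (.inr .pos t) (.disj A B) (n + 1)
  | orE {Γ Δ r s t x y A B C p n} :
      DerivH Γ Δ .pos r (.disj A B) n →
      DerivH (insert (x, A) Γ) Δ p s C n →
      DerivH (insert (y, B) Γ) Δ p t C n →
      DerivH Γ Δ p (.tcase .pos p r x s y t) C (n + 1)
  | orId {Γ Δ s t A B n} : DerivH Γ Δ .neg s A n → DerivH Γ Δ .neg t B n →
      DerivH Γ Δ .neg (.pair .neg s t) (.disj A B) (n + 1)
  | orEd1 {Γ Δ t A B n} : DerivH Γ Δ .neg t (.disj A B) n →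
      DerivH Γ Δ .neg (.fst .neg t) A (n + 1)
  | orEd2 {Γ Δ t A B n} : DerivH Γ Δ .neg t (.disj A B) n →
      DerivH Γ Δ .neg (.snd .neg t) B (n + 1)
  | impI {Γ Δ t x A B n} : DerivH (insert (x, A) Γ) Δ .pos t B n →
      DerivH Γ Δ .pos (.lam .pos x t) (.imp A B) (n + 1)
  | impE {Γ Δ s t A B n} : DerivH Γ Δ .pos s (.imp A B) n →
      DerivH Γ Δ .pos t A n →
      DerivH Γ Δ .pos (.app .pos s t) B (n + 1)
  | impId {Γ Δ s t A B n} : DerivH Γ Δ .pos s A n → DerivH Γ Δ .neg t B n →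
      DerivH Γ Δ .neg (.mpair .neg s t) (.imp A B) (n + 1)
  | impEd1 {Γ Δ t A B n} : DerivH Γ Δ .neg t (.imp A B) n →
      DerivH Γ Δ .pos (.pi1 .pos t) A (n + 1)
  | impEd2 {Γ Δ t A B n} : DerivH Γ Δ .neg t (.imp A B) n →
      DerivH Γ Δ .neg (.pi2 .neg t) B (n + 1)
  | coI {Γ Δ s t A B n} : DerivH Γ Δ .pos t B n → DerivH Γ Δ .neg s A n →
      DerivH Γ Δ .pos (.mpair .pos t s) (.coimp B A) (n + 1)
  | coE1 {Γ Δ t A B n} : DerivH Γ Δ .pos t (.coimp B A) n →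
      DerivH Γ Δ .pos (.pi1 .pos t) B (n + 1)
  | coE2 {Γ Δ t A B n} : DerivH Γ Δ .pos t (.coimp B A) n →
      DerivH Γ Δ .neg (.pi2 .neg t) A (n + 1)
  | coId {Γ Δ t x A B n} : DerivH Γ (insert (x, A) Δ) .neg t B n →
      DerivH Γ Δ .neg (.lam .neg x t) (.coimp B A) (n + 1)
  | coEd {Γ Δ s t A B n} : DerivH Γ Δ .neg s (.coimp B A) n →
      DerivH Γ Δ .neg t A n →
      DerivH Γ Δ .neg (.app .neg s t) B (n + 1)
  | weak {Γ Γ' Δ Δ' : Ctx} {p t A n} : Γ ⊆ Γ' → Δ ⊆ Δ' →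
      DerivH Γ Δ p t A n → DerivH Γ' Δ' p t A n

/-- `(Γ; Δ) ⇒^p t : A` is derivable in N2Int_λ. -/
def Deriv (Γ Δ : Ctx) (p : Pol) (t : Tm) (A : Formula) : Prop :=
  ∃ n, DerivH Γ Δ p t A n

/-- One-step β-reduction: the least compatible relation containing the
β-redex contractions. -/
inductive Red1 : Tm → Tm → Prop
  | beta_app {p x t s} : Red1 (.app p (.lam p x t) s) (subst t p x s)
  | beta_pi1 {p s t} : Red1 (.pi1 .pos (.mpair p s t)) s
  | beta_pi2 {p s t} : Red1 (.pi2 .neg (.mpair p s t)) t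
  | beta_fst {p s t} : Red1 (.fst p (.pair p s t)) s
  | beta_snd {p s t} : Red1 (.snd p (.pair p s t)) t
  | beta_inl {p d r x s y t} :
      Red1 (.tcase p d (.inl p r) x s y t) (subst s p x r)
  | beta_inr {p d r x s y t} :
      Red1 (.tcase p d (.inr p r) x s y t) (subst t p y r)
  | abort_c {p t r} : Red1 t r → Red1 (.abort p t) (.abort p r)
  | pair_l {p t r s} : Red1 t r → Red1 (.pair p t s) (.pair p r s)
  | pair_r {p t r s} : Red1 t r → Red1 (.pair p s t) (.pair p s r)
  | fst_c {p t r} : Red1 t r → Red1 (.fst p t) (.fst p r)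
  | snd_c {p t r} : Red1 t r → Red1 (.snd p t) (.snd p r)
  | inl_c {p t r} : Red1 t r → Red1 (.inl p t) (.inl p r)
  | inr_c {p t r} : Red1 t r → Red1 (.inr p t) (.inr p r)
  | lam_c {p x t r} : Red1 t r → Red1 (.lam p x t) (.lam p x r)
  | app_l {p t r s} : Red1 t r → Red1 (.app p t s) (.app p r s)
  | app_r {p t r s} : Red1 t r → Red1 (.app p s t) (.app p s r)
  | mpair_l {p t r s} : Red1 t r → Red1 (.mpair p t s) (.mpair p r s)
  | mpair_r {p t r s} : Red1 t r → Red1 (.mpair p s t) (.mpair p s r)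
  | tcase_s {q p t r x s y u} : Red1 t r →
      Red1 (.tcase q p t x s y u) (.tcase q p r x s y u)
  | tcase_l {q p t r x s y u} : Red1 t r →
      Red1 (.tcase q p s x t y u) (.tcase q p s x r y u)
  | tcase_r {q p t r x s y u} : Red1 t r →
      Red1 (.tcase q p s x u y t) (.tcase q p s x u y r)
  | pi1_c {p t r} : Red1 t r → Red1 (.pi1 p t) (.pi1 p r)
  | pi2_c {p t r} : Red1 t r → Red1 (.pi2 p t) (.pi2 p r)

/-- Multi-step β-reduction: reflexive transitive closure of `Red1`. -/
def Red : Tm → Tm → Prop := Relation.ReflTransGen Red1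

/- A derivation of an introduction or elimination form ends with the matching rule followed by
weakenings, which can be pushed up to the premises; so these inversions need no smaller context. -/
namespace Deriv

variable {Γ Δ : Ctx}

theorem weaken {Γ' Δ' : Ctx} {p : Pol} {t : Tm} {A : Formula} (h : Deriv Γ Δ p t A)
    (hΓ : Γ ⊆ Γ') (hΔ : Δ ⊆ Δ') : Deriv Γ' Δ' p t A :=
  h.imp fun _ hn => .weak hΓ hΔ hn

theorem of_mpair_imp {q p : Pol} {s r : Tm} {A B : Formula}
    (h : Deriv Γ Δ q (.mpair p s r) (.imp A B)) :
    Deriv Γ Δ .pos s A ∧ Deriv Γ Δ .neg r B := by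
  obtain ⟨n, h⟩ := h
  generalize ht : Tm.mpair p s r = t at h
  generalize hD : Formula.imp A B = D at h
  induction h with
  | impId hs hr => cases ht; cases hD; exact ⟨⟨_, hs⟩, ⟨_, hr⟩⟩
  | weak hΓ hΔ _ ih =>
    obtain ⟨hs, hr⟩ := ih ht hD
    exact ⟨hs.weaken hΓ hΔ, hr.weaken hΓ hΔ⟩
  | _ => contradiction

theorem of_mpair_coimp {q p : Pol} {s r : Tm} {A B : Formula}
    (h : Deriv Γ Δ q (.mpair p s r) (.coimp A B)) :
    Deriv Γ Δ .pos s A ∧ Deriv Γ Δ .neg r B := by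
  obtain ⟨n, h⟩ := h
  generalize ht : Tm.mpair p s r = t at h
  generalize hD : Formula.coimp A B = D at h
  induction h with
  | coI hs hr => cases ht; cases hD; exact ⟨⟨_, hs⟩, ⟨_, hr⟩⟩
  | weak hΓ hΔ _ ih =>
    obtain ⟨hs, hr⟩ := ih ht hD
    exact ⟨hs.weaken hΓ hΔ, hr.weaken hΓ hΔ⟩
  | _ => contradiction

theorem of_pi1 {t : Tm} {C : Formula} (h : Deriv Γ Δ .pos (.pi1 .pos t) C) :
    (∃ B, Deriv Γ Δ .neg t (.imp C B)) ∨ ∃ A, Deriv Γ Δ .pos t (.coimp C A) := by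
  obtain ⟨n, h⟩ := h
  generalize ht : Tm.pi1 .pos t = u at h
  generalize hq : Pol.pos = q at h
  induction h with
  | impEd1 h => cases ht; exact .inl ⟨_, _, h⟩
  | coE1 h => cases ht; exact .inr ⟨_, _, h⟩
  | weak hΓ hΔ _ ih =>
    obtain ⟨B, h⟩ | ⟨A, h⟩ := ih ht hq
    exacts [.inl ⟨B, h.weaken hΓ hΔ⟩, .inr ⟨A, h.weaken hΓ hΔ⟩]
  | _ => contradiction

theorem of_pi2 {t : Tm} {C : Formula} (h : Deriv Γ Δ .neg (.pi2 .neg t) C) :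
    (∃ A, Deriv Γ Δ .neg t (.imp A C)) ∨ ∃ B, Deriv Γ Δ .pos t (.coimp B C) := by
  obtain ⟨n, h⟩ := h
  generalize ht : Tm.pi2 .neg t = u at h
  generalize hq : Pol.neg = q at h
  induction h with
  | impEd2 h => cases ht; exact .inl ⟨_, _, h⟩
  | coE2 h => cases ht; exact .inr ⟨_, _, h⟩
  | weak hΓ hΔ _ ih =>
    obtain ⟨A, h⟩ | ⟨B, h⟩ := ih ht hq
    exacts [.inl ⟨A, h.weaken hΓ hΔ⟩, .inr ⟨B, h.weaken hΓ hΔ⟩]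
  | _ => contradiction

end Deriv

/-- subject reduction for the projection redexes. -/
theorem subject_reduction_proj (Γ Δ : Ctx) (p : Pol) (s r : Tm) (C : Formula) :
    (Deriv Γ Δ .pos (.pi1 .pos (.mpair p s r)) C →
      ∃ Γ' Δ' : Ctx, Γ' ⊆ Γ ∧ Δ' ⊆ Δ ∧ Deriv Γ' Δ' .pos s C) ∧
    (Deriv Γ Δ .neg (.pi2 .neg (.mpair p s r)) C →
      ∃ Γ' Δ' : Ctx, Γ' ⊆ Γ ∧ Δ' ⊆ Δ ∧ Deriv Γ' Δ' .neg r C) := by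
  refine ⟨fun h => ⟨Γ, Δ, subset_rfl, subset_rfl, ?_⟩, fun h => ⟨Γ, Δ, subset_rfl, subset_rfl, ?_⟩⟩
  · obtain ⟨_, h⟩ | ⟨_, h⟩ := h.of_pi1
    exacts [h.of_mpair_imp.1, h.of_mpair_coimp.1]
  · obtain ⟨_, h⟩ | ⟨_, h⟩ := h.of_pi2
    exacts [h.of_mpair_imp.2, h.of_mpair_coimp.2]

end TwoInt
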